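/- Let (V,g) be a finite-dimensional real vector space with symmetric bilinear form g of rank k, and let (e_a) be an orthogonal basis with g(e_a,e_a) = 0 for a ≤ dim V − k and g(e_a,e_a) ≠ 0 otherwise. Then for any ω, τ ∈ V°, g•(ω,τ) = Σ_{a : g(e_a,e_a) ≠ 0} ω(e_a) τ(e_a) / g(e_a,e_a). -/

import Mathlib

/-!
Writing `ω = g u` and `τ = g v`, we have `g•(ω, τ) = g(u, v)`. In an orthogonal basis `g` is
diagonal, so `g(u, e_a) = u^a g(e_a, e_a)` and `g(u, v) = Σ_a u^a v^a g(e_a, e_a)`; the null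
directions contribute nothing, and on the others `u^a v^a g(e_a, e_a) = ω(e_a) τ(e_a) / g(e_a, e_a)`.
-/

namespace LinearMap.IsOrthoᵢ

variable {R M ι : Type*} [CommSemiring R] [AddCommMonoid M] [Module R M]
  {B : M →ₗ[R] M →ₗ[R] R} {e : Module.Basis ι R M}

theorem apply_basis_right (h : B.IsOrthoᵢ e) (x : M) (i : ι) :
    B x (e i) = e.repr x i * B (e i) (e i) := by
  conv_lhs => rw [← e.linearCombination_repr x]
  rw [Finsupp.linearCombination_apply, Finsupp.sum, map_sum, LinearMap.sum_apply]
  simp only [map_smul, LinearMap.smul_apply, smul_eq_mul]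
  rw [Finset.sum_eq_single i (fun j _ hji => by rw [h hji, mul_zero])
    (fun hi => by rw [Finsupp.notMem_support_iff.mp hi, zero_mul])]

theorem apply_eq_sum [Fintype ι] (h : B.IsOrthoᵢ e) (x y : M) :
    B x y = ∑ i, e.repr x i * e.repr y i * B (e i) (e i) := by
  conv_lhs => rw [← e.sum_repr y]
  simp only [map_sum, map_smul, smul_eq_mul, h.apply_basis_right x]
  exact Finset.sum_congr rfl fun i _ => by ring

theorem apply_eq_sum_div {K V : Type*} [Field K] [DecidableEq K] [AddCommGroup V] [Module K V]
    [Fintype ι] {B : V →ₗ[K] V →ₗ[K] K} {e : Module.Basis ι K V} (h : B.IsOrthoᵢ e) (x y : V) :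
    B x y = ∑ i ∈ Finset.univ.filter (fun i => B (e i) (e i) ≠ 0),
      B x (e i) * B y (e i) / B (e i) (e i) := by
  rw [Finset.sum_filter, h.apply_eq_sum]
  refine Finset.sum_congr rfl fun i _ => ?_
  rw [h.apply_basis_right x, h.apply_basis_right y]
  split_ifs with hi
  · field_simp
  · rw [not_not.mp hi, mul_zero]

end LinearMap.IsOrthoᵢ

theorem stmt7_general {V : Type*} [AddCommGroup V] [Module ℝ V]
    (g : V →ₗ[ℝ] V →ₗ[ℝ] ℝ) (n : ℕ)
    (e : Module.Basis (Fin n) ℝ V)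
    (horth : ∀ i j, i ≠ j → g (e i) (e j) = 0)
    (G : Module.Dual ℝ V → Module.Dual ℝ V → ℝ)
    (hG : ∀ u v : V, G (g u) (g v) = g u v)
    (ω τ : Module.Dual ℝ V) (hω : ω ∈ LinearMap.range g) (hτ : τ ∈ LinearMap.range g) :
    G ω τ = ∑ a ∈ Finset.univ.filter (fun a : Fin n => g (e a) (e a) ≠ 0),
      ω (e a) * τ (e a) / g (e a) (e a) := by
  obtain ⟨u, rfl⟩ := hω
  obtain ⟨v, rfl⟩ := hτ
  rw [hG]
  exact LinearMap.IsOrthoᵢ.apply_eq_sum_div horth u v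

/-- If (e_a) is an orthogonal basis with g(e_a,e_a) = 0 exactly for
a < dim V − rank g, then for all radical-annihilator 1-forms ω, τ,
g•(ω,τ) = Σ_{a : g(e_a,e_a) ≠ 0} ω(e_a) τ(e_a) / g(e_a,e_a). -/
theorem stmt7 {V : Type*} [AddCommGroup V] [Module ℝ V] [FiniteDimensional ℝ V]
    (g : V →ₗ[ℝ] V →ₗ[ℝ] ℝ) (hsymm : ∀ u v, g u v = g v u)
    (n k : ℕ) (hn : n = Module.finrank ℝ V) (hk : k = LinearMap.rank g)
    (e : Module.Basis (Fin n) ℝ V)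
    (horth : ∀ i j, i ≠ j → g (e i) (e j) = 0)
    (hzero : ∀ a : Fin n, g (e a) (e a) = 0 ↔ (a : ℕ) < n - k)
    (G : Module.Dual ℝ V → Module.Dual ℝ V → ℝ)
    (hG : ∀ u v : V, G (g u) (g v) = g u v)
    (ω τ : Module.Dual ℝ V) (hω : ω ∈ LinearMap.range g) (hτ : τ ∈ LinearMap.range g) :
    G ω τ = ∑ a ∈ Finset.univ.filter (fun a : Fin n => g (e a) (e a) ≠ 0),
      ω (e a) * τ (e a) / g (e a) (e a) :=
  stmt7_general g n e horth G hG ω τ hω hτ
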